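/- Let (a_k)_{k≥0} be real numbers with a₀ ≠ 0, and suppose there exist A, R > 0 such that |a_k| ≤ A·R^k for all k ≥ 0. Define V(z) = Σ_{k≥0} a_k·z^k for |z| < 1/R, and let the polynomials {Pₙ} be defined by P₋₁ = 0, P₀ = 1 and the recursion x·Pₙ(x) = P_{n−1}(x) + Σ_{k=0}^{n} a_k·P_{n+1−k}(x) for n ≥ 0. Then for every compact set K ⊂ ℝ there exists r > 0 (independent of x ∈ K) such that for all z with |z| < r the series Σ_{n≥0} Pₙ(x)·zⁿ converges uniformly over x ∈ K, with sum equal to V(z)/(V(z) + z(z − x)). -/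

import Mathlib

open MeasureTheory Filter

noncomputable section

/-
Evaluated at a point `x`, the recursion says that `Pₙ(x)` grows at most like `Mⁿ`, with `M`
depending only on a bound for `|x|`: solving for `a₀ P_{n+1}(x)` and using `|a_k| ≤ A Rᵏ` with
`R ≤ M/2` bounds the convolution term by a geometric series. Hence `S(z) = Σ Pₙ(x) zⁿ` converges
uniformly on `K` for `|z| < 1/M`. Multiplying the recursion by `z^{n+1}` and summing over `n`
turns it into `x z S = z² S + V (S - 1)` (the last term is a Cauchy product), that is
`S (V + z(z - x)) = V`, and for small `z` the factor `V + z(z - x)` stays close to `a₀ ≠ 0`.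
-/

open Finset Polynomial

/-- The recursion of the theorem for the values `p n = Pₙ(x)`; the `if` encodes `P₋₁ = 0`. -/
def SolvesRecurrence (a : ℕ → ℝ) (x : ℝ) (p : ℕ → ℝ) : Prop :=
  ∀ n, x * p n = (if n = 0 then 0 else p (n - 1)) + ∑ k ∈ range (n + 1), a k * p (n + 1 - k)

theorem solvesRecurrence_eval {a : ℕ → ℝ} {P : ℕ → ℝ[X]}
    (hrec : ∀ n : ℕ, X * P n =
      (if n = 0 then 0 else P (n - 1)) + ∑ k ∈ range (n + 1), C (a k) * P (n + 1 - k))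
    (x : ℝ) : SolvesRecurrence a x fun n => (P n).eval x := fun n => by
  simpa [apply_ite (eval x), eval_finsetSum] using congrArg (eval x) (hrec n)

theorem SolvesRecurrence.coeff_zero_mul_succ {a p : ℕ → ℝ} {x : ℝ}
    (hp : SolvesRecurrence a x p) (m : ℕ) :
    a 0 * p (m + 1) = x * p m - (if m = 0 then 0 else p (m - 1)) -
      ∑ k ∈ range m, a (k + 1) * p (m - k) := by
  have h := hp m
  rw [sum_range_succ'] at h
  simp only [Nat.add_sub_add_right, Nat.sub_zero] at h
  linarith

/-- Conditions giving `|Pₙ(x)| ≤ Mⁿ` for `|x| ≤ B` (`SolvesRecurrence.abs_le_pow`); they also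
keep `V(z) + z(z - x)` away from zero for `|z| < 1/M` (`add_mul_sub_ne_zero`). -/
structure IsGrowthConstant (a : ℕ → ℝ) (A R B M : ℝ) : Prop where
  one_le : 1 ≤ M
  two_mul_le : 2 * R ≤ M
  le_mul : B + 1 + 2 * A * R ≤ |a 0| * M

theorem exists_isGrowthConstant {a : ℕ → ℝ} (ha0 : a 0 ≠ 0) (A R B : ℝ) :
    ∃ M, IsGrowthConstant a A R B M := by
  refine ⟨max 1 (max (2 * R) ((B + 1 + 2 * A * R) / |a 0|)), le_max_left _ _,
    (le_max_left _ _).trans (le_max_right _ _), ?_⟩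
  rw [← div_le_iff₀' (abs_pos.2 ha0)]
  exact (le_max_right _ _).trans (le_max_right _ _)

theorem abs_sum_coeff_mul_le {a p : ℕ → ℝ} {A R M : ℝ} (hA : 0 ≤ A) (hR : 0 ≤ R)
    (hbound : ∀ k, |a k| ≤ A * R ^ k) (hRM : 2 * R ≤ M) {m : ℕ}
    (hp : ∀ j ≤ m, |p j| ≤ M ^ j) :
    |∑ k ∈ range m, a (k + 1) * p (m - k)| ≤ 2 * A * R * M ^ m := by
  have hM : 0 ≤ M := by linarith
  have hterm : ∀ k ∈ range m, |a (k + 1) * p (m - k)| ≤ A * R * M ^ m * (1 / 2) ^ k := by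
    intro k hk
    have hkm : k ≤ m := (mem_range.1 hk).le
    calc |a (k + 1) * p (m - k)| ≤ A * R ^ (k + 1) * M ^ (m - k) := by
          rw [abs_mul]
          exact mul_le_mul (hbound _) (hp _ (Nat.sub_le _ _)) (abs_nonneg _) (by positivity)
      _ = A * R * (R ^ k * M ^ (m - k)) := by ring
      _ ≤ A * R * ((M / 2) ^ k * M ^ (m - k)) := by gcongr; linarith
      _ = A * R * (M ^ (m - k) * M ^ k) * (1 / 2) ^ k := by ring
      _ = A * R * M ^ m * (1 / 2) ^ k := by rw [pow_sub_mul_pow _ hkm]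
  calc |∑ k ∈ range m, a (k + 1) * p (m - k)|
      ≤ ∑ k ∈ range m, A * R * M ^ m * (1 / 2) ^ k :=
        (abs_sum_le_sum_abs _ _).trans (sum_le_sum hterm)
    _ = A * R * M ^ m * ∑ k ∈ range m, (1 / 2 : ℝ) ^ k := by rw [mul_sum]
    _ ≤ A * R * M ^ m * 2 := by gcongr; exact sum_geometric_two_le m
    _ = 2 * A * R * M ^ m := by ring

theorem SolvesRecurrence.abs_le_pow {a p : ℕ → ℝ} {A R B M x : ℝ}
    (hp : SolvesRecurrence a x p) (hp0 : p 0 = 1) (ha0 : a 0 ≠ 0) (hA : 0 ≤ A) (hR : 0 ≤ R)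
    (hbound : ∀ k, |a k| ≤ A * R ^ k) (hM : IsGrowthConstant a A R B M) (hx : |x| ≤ B)
    (n : ℕ) : |p n| ≤ M ^ n := by
  induction n using Nat.strong_induction_on with
  | _ n ih =>
  have hM0 : 0 ≤ M := zero_le_one.trans hM.one_le
  rcases n with _ | m
  · simp [hp0]
  have h_x : |x * p m| ≤ B * M ^ m := by
    rw [abs_mul]
    exact mul_le_mul hx (ih m (by omega)) (abs_nonneg _) ((abs_nonneg x).trans hx)
  have h_prev : |if m = 0 then 0 else p (m - 1)| ≤ M ^ m := by
    split_ifs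
    · simpa using pow_nonneg hM0 m
    · exact (ih _ (by omega)).trans (pow_le_pow_right₀ hM.one_le (Nat.sub_le m 1))
  have h_sum := abs_sum_coeff_mul_le hA hR hbound hM.two_mul_le fun j (hj : j ≤ m) =>
    ih j (by omega)
  have h_lead : |a 0| * |p (m + 1)| ≤ |a 0| * M ^ (m + 1) := calc
    |a 0| * |p (m + 1)| = |x * p m - (if m = 0 then 0 else p (m - 1)) -
        ∑ k ∈ range m, a (k + 1) * p (m - k)| := by rw [← abs_mul, hp.coeff_zero_mul_succ]
    _ ≤ |x * p m| + |if m = 0 then 0 else p (m - 1)| +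
        |∑ k ∈ range m, a (k + 1) * p (m - k)| :=
      (abs_sub _ _).trans (add_le_add_left (abs_sub _ _) _)
    _ ≤ (B + 1 + 2 * A * R) * M ^ m := by linarith
    _ ≤ |a 0| * M * M ^ m := mul_le_mul_of_nonneg_right hM.le_mul (pow_nonneg hM0 m)
    _ = |a 0| * M ^ (m + 1) := by ring
  exact le_of_mul_le_mul_left h_lead (abs_pos.2 ha0)

theorem summable_norm_coeff_mul_pow {a : ℕ → ℝ} {A R z : ℝ} (hR : 0 ≤ R)
    (hbound : ∀ k, |a k| ≤ A * R ^ k) (hRz : R * |z| < 1) :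
    Summable fun k => ‖a k * z ^ k‖ := by
  refine ((summable_geometric_of_lt_one (by positivity) hRz).mul_left A).of_norm_bounded
    fun k => ?_
  rw [norm_norm, norm_mul, norm_pow, Real.norm_eq_abs, Real.norm_eq_abs, mul_pow, ← mul_assoc]
  gcongr
  exact hbound k

theorem abs_tsum_coeff_mul_pow_sub_le {a : ℕ → ℝ} {A R z : ℝ} (hR : 0 ≤ R)
    (hbound : ∀ k, |a k| ≤ A * R ^ k) (hRz : R * |z| < 1) :
    |∑' k, a k * z ^ k - a 0| ≤ A * R * |z| * (1 - R * |z|)⁻¹ := by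
  have hV := (summable_norm_coeff_mul_pow hR hbound hRz).of_norm.hasSum
  have htail := (hasSum_nat_add_iff' 1).2 hV
  simp only [range_one, sum_singleton, pow_zero, mul_one] at htail
  rw [← htail.tsum_eq, ← Real.norm_eq_abs]
  refine tsum_of_norm_bounded
    ((hasSum_geometric_of_lt_one (by positivity) hRz).mul_left (A * R * |z|)) fun k => ?_
  rw [norm_mul, norm_pow, Real.norm_eq_abs, Real.norm_eq_abs]
  calc |a (k + 1)| * |z| ^ (k + 1) ≤ A * R ^ (k + 1) * |z| ^ (k + 1) := by
        gcongr; exact hbound _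
    _ = A * R * |z| * (R * |z|) ^ k := by ring

theorem add_mul_sub_ne_zero {a : ℕ → ℝ} {A R B M x z : ℝ} (ha0 : a 0 ≠ 0) (hA : 0 ≤ A)
    (hR : 0 ≤ R)
    (hbound : ∀ k, |a k| ≤ A * R ^ k) (hM : IsGrowthConstant a A R B M) (hx : |x| ≤ B)
    (hMz : M * |z| < 1) :
    ∑' k, a k * z ^ k + z * (z - x) ≠ 0 := by
  have hRz : R * |z| ≤ 1 / 2 := by nlinarith [hM.two_mul_le, abs_nonneg z]
  have hz : |z| ≤ 1 := by nlinarith [hM.one_le, abs_nonneg z]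
  have h_tail : |∑' k, a k * z ^ k - a 0| ≤ 2 * A * R * |z| := by
    refine (abs_tsum_coeff_mul_pow_sub_le hR hbound (by linarith)).trans ?_
    rw [← div_eq_mul_inv, div_le_iff₀ (by linarith)]
    nlinarith [mul_nonneg (mul_nonneg hA hR) (abs_nonneg z)]
  have h_quad : |z * (z - x)| ≤ |z| * (1 + B) := by
    rw [abs_mul]
    gcongr
    exact (abs_sub _ _).trans (add_le_add hz hx)
  have h_near : |∑' k, a k * z ^ k + z * (z - x) - a 0| < |a 0| := calc
    _ ≤ |∑' k, a k * z ^ k - a 0| + |z * (z - x)| := by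
        rw [add_sub_right_comm]; exact abs_add_le _ _
    _ ≤ (B + 1 + 2 * A * R) * |z| := by linarith
    _ ≤ |a 0| * (M * |z|) := by rw [← mul_assoc]; gcongr; exact hM.le_mul
    _ < |a 0| := mul_lt_of_lt_one_right (abs_pos.2 ha0) hMz
  intro h
  rw [h, zero_sub, abs_neg] at h_near
  exact h_near.false

theorem SolvesRecurrence.tsum_mul_pow_mul_eq {a p : ℕ → ℝ} {x z : ℝ}
    (hp : SolvesRecurrence a x p) (hp0 : p 0 = 1) (ha : Summable fun k => ‖a k * z ^ k‖)
    (hps : Summable fun n => ‖p n * z ^ n‖) :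
    (∑' n, p n * z ^ n) * (∑' k, a k * z ^ k + z * (z - x)) = ∑' k, a k * z ^ k := by
  set S := ∑' n, p n * z ^ n
  set V := ∑' k, a k * z ^ k
  have hS : HasSum (fun n => p n * z ^ n) S := hps.of_norm.hasSum
  have h_shift : HasSum (fun n => (if n = 0 then 0 else p (n - 1)) * z ^ (n + 1)) (z ^ 2 * S) := by
    have h := (hasSum_nat_add_iff (f := fun n => (if n = 0 then 0 else p (n - 1)) * z ^ (n + 1))
      1).1 ((hS.mul_left (z ^ 2)).congr_fun fun n => by simp only [Nat.add_eq_zero_iff,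
        one_ne_zero, and_false, if_false, Nat.add_sub_cancel]; ring)
    simpa using h
  have h_tail : HasSum (fun n => p (n + 1) * z ^ (n + 1)) (S - 1) := by
    simpa [hp0] using (hasSum_nat_add_iff' 1).2 hS
  have h_conv : HasSum (fun n => (∑ k ∈ range (n + 1), a k * p (n + 1 - k)) * z ^ (n + 1))
      (V * (S - 1)) := by
    rw [← h_tail.tsum_eq]
    refine (hasSum_sum_range_mul_of_summable_norm ha
      ((summable_nat_add_iff 1).2 hps)).congr_fun fun n => ?_
    rw [sum_mul]
    refine sum_congr rfl fun k hk => ?_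
    have hkn : k ≤ n := Nat.lt_succ_iff.1 (mem_range.1 hk)
    rw [show n + 1 - k = n - k + 1 by omega, ← pow_sub_mul_pow z (show k ≤ n + 1 by omega),
      show n + 1 - k = n - k + 1 by omega]
    ring
  have h_lhs : HasSum (fun n => x * p n * z ^ (n + 1)) (x * z * S) := by
    refine (hS.mul_left (x * z)).congr_fun fun n => ?_
    ring
  have h_eq : x * z * S = z ^ 2 * S + V * (S - 1) :=
    h_lhs.unique ((h_shift.add h_conv).congr_fun fun n => by rw [hp n, add_mul])
  linear_combination -h_eq

theorem SolvesRecurrence.norm_mul_pow_le {a p : ℕ → ℝ} {A R B M x : ℝ}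
    (hp : SolvesRecurrence a x p) (hp0 : p 0 = 1) (ha0 : a 0 ≠ 0) (hA : 0 ≤ A) (hR : 0 ≤ R)
    (hbound : ∀ k, |a k| ≤ A * R ^ k) (hM : IsGrowthConstant a A R B M) (hx : |x| ≤ B)
    (z : ℝ) (n : ℕ) : ‖p n * z ^ n‖ ≤ (M * |z|) ^ n := by
  rw [norm_mul, norm_pow, Real.norm_eq_abs, Real.norm_eq_abs, mul_pow]
  gcongr
  exact hp.abs_le_pow hp0 ha0 hA hR hbound hM hx n

theorem SolvesRecurrence.tsum_mul_pow_eq_div {a p : ℕ → ℝ} {A R B M x z : ℝ}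
    (hp : SolvesRecurrence a x p) (hp0 : p 0 = 1) (ha0 : a 0 ≠ 0) (hA : 0 ≤ A) (hR : 0 ≤ R)
    (hbound : ∀ k, |a k| ≤ A * R ^ k) (hM : IsGrowthConstant a A R B M) (hx : |x| ≤ B)
    (hMz : M * |z| < 1) :
    ∑' n, p n * z ^ n = (∑' k, a k * z ^ k) / (∑' k, a k * z ^ k + z * (z - x)) := by
  have hRz : R * |z| < 1 := by nlinarith [hM.two_mul_le, abs_nonneg z]
  have hps : Summable fun n => ‖p n * z ^ n‖ :=
    (summable_geometric_of_lt_one (mul_nonneg (zero_le_one.trans hM.one_le) (abs_nonneg z))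
      hMz).of_nonneg_of_le (fun _ => norm_nonneg _)
      (hp.norm_mul_pow_le hp0 ha0 hA hR hbound hM hx z)
  rw [eq_div_iff (add_mul_sub_ne_zero ha0 hA hR hbound hM hx hMz)]
  exact hp.tsum_mul_pow_mul_eq hp0 (summable_norm_coeff_mul_pow hR hbound hRz) hps

/-- If `|a_k| ≤ A·R^k` with `a₀ ≠ 0` and the polynomials `Pₙ` satisfy the recursion
`x·Pₙ = P_{n−1} + Σ_{k=0}^{n} a_k·P_{n+1−k}` (with `P₋₁ = 0`, `P₀ = 1`), then for every
compact `K ⊆ ℝ` there is `r > 0` such that for every `z` with `|z| < r` the series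
`Σ Pₙ(x)·zⁿ` converges uniformly in `x ∈ K` to `V(z)/(V(z) + z(z−x))`, where
`V(z) = Σ a_k·z^k`. -/
theorem generating_series_uniform_convergence (a : ℕ → ℝ) (A R : ℝ)
    (hA : 0 < A) (hR : 0 < R) (ha0 : a 0 ≠ 0)
    (hbound : ∀ k : ℕ, |a k| ≤ A * R ^ k)
    (P : ℕ → Polynomial ℝ) (hP0 : P 0 = 1)
    (hrec : ∀ n : ℕ, Polynomial.X * P n =
      (if n = 0 then 0 else P (n - 1)) +
        ∑ k ∈ Finset.range (n + 1), Polynomial.C (a k) * P (n + 1 - k))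
    (K : Set ℝ) (hK : IsCompact K) :
    ∃ r > 0, ∀ z : ℝ, |z| < r →
      TendstoUniformlyOn
        (fun N : ℕ => fun x : ℝ => ∑ n ∈ Finset.range N, (P n).eval x * z ^ n)
        (fun x : ℝ =>
          (∑' k : ℕ, a k * z ^ k) / ((∑' k : ℕ, a k * z ^ k) + z * (z - x)))
        atTop K := by
  obtain ⟨B, hB⟩ := isBounded_iff_forall_norm_le.1 hK.isBounded
  obtain ⟨M, hM⟩ := exists_isGrowthConstant ha0 A R B
  have hM0 : 0 < M := zero_lt_one.trans_le hM.one_le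
  refine ⟨M⁻¹, inv_pos.2 hM0, fun z hz => ?_⟩
  have hMz : M * |z| < 1 := by simpa [hM0.ne'] using mul_lt_mul_of_pos_left hz hM0
  have hp0 : ∀ x, (P 0).eval x = 1 := by simp [hP0]
  refine (tendstoUniformlyOn_tsum_nat (summable_geometric_of_lt_one (by positivity) hMz)
    fun n x hx => ?_).congr_right fun x hx => ?_
  · exact (solvesRecurrence_eval hrec x).norm_mul_pow_le (hp0 x) ha0 hA.le hR.le hbound hM
      (hB x hx) z n
  · exact (solvesRecurrence_eval hrec x).tsum_mul_pow_eq_div (hp0 x) ha0 hA.le hR.le hbound hM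
      (hB x hx) hMz
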